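/- (Corollary 4.1) Let P_k denote the normalized shifted Legendre polynomial of degree k on [0,1] and ξ₁ = 1/(2√3). Let S be a finite set of pairs (i,j) of nonnegative integers with i + j even and i + j > 1 for every (i,j) ∈ S, and let Ā(τ,σ) = α₀₀ − (ξ₁/2) P₁(σ) + (ξ₁/2) P₁(τ) + Σ_{(i,j)∈S} α_{(i,j)} P_i(τ) P_j(σ) with arbitrary real α₀₀ and α_{(i,j)}. Let (b_i, c_i)_{i=1}^s satisfy c_i ∈ [0,1], b_{s+1−i} = b_i and c_{s+1−i} = 1 − c_i for all i. Then the s-stage RKN coefficients ā_{ij} = b_j Ā(c_i, c_j), b̄_i = b_i (1 − c_i), β_i = b_i, γ_i = c_i satisfy the classical RKN symmetry conditions: γ_i = 1 − γ_{s+1−i}, ā_{ij} = β_{s+1−j}(1 − γ_{s+1−i}) − b̄_{s+1−j} + ā_{s+1−i,s+1−j}, b̄_i = β_{s+1−i} − b̄_{s+1−i}, β_i = β_{s+1−i}, for all i, j = 1,…,s. -/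

import Mathlib

open Set

noncomputable section

/-- The normalized shifted Legendre polynomial of degree `k` on `[0,1]`,
given by the Rodrigues formula `P_k(x) = (√(2k+1)/k!) dᵏ/dxᵏ [(x² - x)ᵏ]`. -/
def legP (k : ℕ) (x : ℝ) : ℝ :=
  (Real.sqrt (2 * (k : ℝ) + 1) / (Nat.factorial k : ℝ)) *
    iteratedDeriv k (fun y : ℝ => (y ^ 2 - y) ^ k) x

/-- `ξ₁ = 1/(2√3)`. -/
def xi1 : ℝ := 1 / (2 * Real.sqrt 3)

/-!
Reflection `x ↦ 1 - x` fixes `(x² - x)ᵏ`, so by Rodrigues' formula `P_k(1 - x) = (-1)ᵏ P_k(x)`.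
Hence every term `P_i(τ) P_j(σ)` with `i + j` even is invariant under `(τ, σ) ↦ (1 - τ, 1 - σ)`,
while `(ξ₁/2) P₁(x) = (x - 1/2)/2` changes sign, so `Ā(1 - τ, 1 - σ) = Ā(τ, σ) - τ + σ`.
With `c_{s+1-i} = 1 - c_i` and `b_{s+1-i} = b_i` this is exactly the symmetry condition on `ā`;
the other three conditions are immediate.
-/

theorem iteratedDeriv_const_sub_of_symm {𝕜 F : Type*} [NontriviallyNormedField 𝕜]
    [NormedAddCommGroup F] [NormedSpace 𝕜 F] {f : 𝕜 → F} {a : 𝕜} (hf : ∀ y, f (a - y) = f y)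
    (n : ℕ) (x : 𝕜) : iteratedDeriv n f (a - x) = (-1 : 𝕜) ^ n • iteratedDeriv n f x := by
  have hf' : f = fun y => f (a - y) := funext fun y => (hf y).symm
  conv_lhs => rw [hf']
  simp only [iteratedDeriv_comp_const_sub, sub_sub_cancel]

theorem legP_one_sub (k : ℕ) (x : ℝ) : legP k (1 - x) = (-1 : ℝ) ^ k * legP k x := by
  rw [legP, legP, iteratedDeriv_const_sub_of_symm (fun y => by ring), smul_eq_mul]
  ring

theorem legP_one (x : ℝ) : legP 1 x = Real.sqrt 3 * (2 * x - 1) := by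
  have hderiv : deriv (fun y : ℝ => (y ^ 2 - y) ^ 1) x = 2 * x - 1 := by
    simp only [pow_one]
    rw [deriv_fun_sub (by fun_prop) (by fun_prop), deriv_pow_field, deriv_id'']
    ring
  rw [legP, iteratedDeriv_one, hderiv]
  norm_num

theorem xi1_mul_legP_one (x : ℝ) : xi1 * legP 1 x = x - 1 / 2 := by
  rw [legP_one, xi1]
  field_simp

theorem sum_legP_mul_legP_one_sub (S : Finset (ℕ × ℕ)) (hS : ∀ p ∈ S, Even (p.1 + p.2))
    (α : ℕ × ℕ → ℝ) (τ σ : ℝ) :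
    ∑ p ∈ S, α p * legP p.1 (1 - τ) * legP p.2 (1 - σ) =
      ∑ p ∈ S, α p * legP p.1 τ * legP p.2 σ := by
  refine Finset.sum_congr rfl fun p hp => ?_
  have hsign : (-1 : ℝ) ^ p.1 * (-1) ^ p.2 = 1 := by
    rw [← pow_add, (hS p hp).neg_one_pow]
  rw [legP_one_sub, legP_one_sub]
  linear_combination α p * legP p.1 τ * legP p.2 σ * hsign

theorem abar_one_sub (S : Finset (ℕ × ℕ)) (hS : ∀ p ∈ S, Even (p.1 + p.2))
    (α₀₀ : ℝ) (α : ℕ × ℕ → ℝ) (Abar : ℝ → ℝ → ℝ)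
    (hAbar : ∀ τ σ : ℝ, Abar τ σ =
      α₀₀ - (xi1 / 2) * legP 1 σ + (xi1 / 2) * legP 1 τ +
        ∑ p ∈ S, α p * legP p.1 τ * legP p.2 σ)
    (τ σ : ℝ) : Abar (1 - τ) (1 - σ) = Abar τ σ - τ + σ := by
  rw [hAbar, hAbar, sum_legP_mul_legP_one_sub S hS, legP_one_sub 1 τ, legP_one_sub 1 σ]
  linear_combination xi1_mul_legP_one σ - xi1_mul_legP_one τ

theorem quadrature_symmetric_RKN_general
    (S : Finset (ℕ × ℕ)) (hS : ∀ p ∈ S, Even (p.1 + p.2) ∧ 1 < p.1 + p.2)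
    (α₀₀ : ℝ) (α : ℕ × ℕ → ℝ)
    (Abar : ℝ → ℝ → ℝ)
    (hAbar : ∀ τ σ : ℝ, Abar τ σ =
      α₀₀ - (xi1 / 2) * legP 1 σ + (xi1 / 2) * legP 1 τ +
        ∑ p ∈ S, α p * legP p.1 τ * legP p.2 σ)
    (s : ℕ) (b c : Fin s → ℝ)
    (hbrev : ∀ i : Fin s, b i.rev = b i)
    (hcrev : ∀ i : Fin s, c i.rev = 1 - c i) :
    (∀ i : Fin s, c i = 1 - c i.rev) ∧
    (∀ i j : Fin s, b j * Abar (c i) (c j) =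
        b j.rev * (1 - c i.rev) - b j.rev * (1 - c j.rev) +
          b j.rev * Abar (c i.rev) (c j.rev)) ∧
    (∀ i : Fin s, b i * (1 - c i) = b i.rev - b i.rev * (1 - c i.rev)) ∧
    (∀ i : Fin s, b i = b i.rev) := by
  refine ⟨fun i => by rw [hcrev]; ring, fun i j => ?_, fun i => by rw [hbrev, hcrev]; ring,
    fun i => (hbrev i).symm⟩
  rw [hbrev, hcrev i, hcrev j,
    abar_one_sub S (fun p hp => (hS p hp).1) α₀₀ α Abar hAbar]
  ring

/-- Corollary 4.1: for
`Ā(τ,σ) = α₀₀ - (ξ₁/2)P₁(σ) + (ξ₁/2)P₁(τ) + Σ_{(i,j)∈S} α_{(i,j)} P_i(τ)P_j(σ)`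
(`i + j` even, `> 1` on `S`) and a symmetric quadrature formula `(bᵢ, cᵢ)`, the RKN
coefficients `āᵢⱼ = bⱼ Ā(cᵢ,cⱼ)`, `b̄ᵢ = bᵢ(1-cᵢ)`, `βᵢ = bᵢ`, `γᵢ = cᵢ` satisfy the
classical RKN symmetry conditions.  (Here `i.rev` plays the role of `s+1-i`.) -/
theorem quadrature_symmetric_RKN
    (S : Finset (ℕ × ℕ)) (hS : ∀ p ∈ S, Even (p.1 + p.2) ∧ 1 < p.1 + p.2)
    (α₀₀ : ℝ) (α : ℕ × ℕ → ℝ)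
    (Abar : ℝ → ℝ → ℝ)
    (hAbar : ∀ τ σ : ℝ, Abar τ σ =
      α₀₀ - (xi1 / 2) * legP 1 σ + (xi1 / 2) * legP 1 τ +
        ∑ p ∈ S, α p * legP p.1 τ * legP p.2 σ)
    (s : ℕ) (b c : Fin s → ℝ)
    (hc : ∀ i, c i ∈ Set.Icc (0:ℝ) 1)
    (hbrev : ∀ i : Fin s, b i.rev = b i)
    (hcrev : ∀ i : Fin s, c i.rev = 1 - c i) :
    (∀ i : Fin s, c i = 1 - c i.rev) ∧
    (∀ i j : Fin s, b j * Abar (c i) (c j) =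
        b j.rev * (1 - c i.rev) - b j.rev * (1 - c j.rev) +
          b j.rev * Abar (c i.rev) (c j.rev)) ∧
    (∀ i : Fin s, b i * (1 - c i) = b i.rev - b i.rev * (1 - c i.rev)) ∧
    (∀ i : Fin s, b i = b i.rev) :=
  quadrature_symmetric_RKN_general S hS α₀₀ α Abar hAbar s b c hbrev hcrev
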